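/- Let M be the finite subset of the boundary of the cube [0,1]³ (with the ℓ∞ metric) consisting of, for each of the 6 faces, the center of the face and the midpoints of its 4 edges. For i = 1,2,3 let f_i ∈ TP(M) assign +1/6 to each of the 4 edge-midpoints and +1/3 to the center of the face x_i = 0, and −1/6 and −1/3 at the corresponding points of the face x_i = 1. Then ||f_i||_TC = 1 for each i, and ||Σ_{i=1}^3 θ_i f_i||_TC = 1 for all signs θ_i ∈ {−1,1}; hence f₁, f₂, f₃ are completely intertwined and TC(M) contains an isometric copy of ℓ∞³. -/
import Mathlib


/-- The transportation cost (Kantorovich–Rubinstein) norm of a finitely supported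
zero-sum function `f` on a metric space: the infimum of costs of transportation
plans solving `f`. -/
noncomputable def tcCost {M : Type*} [MetricSpace M] (f : M →₀ ℝ) : ℝ :=
  sInf {c : ℝ | ∃ (n : ℕ) (a : Fin n → ℝ) (x y : Fin n → M),
    (∀ i, 0 ≤ a i) ∧
    f = ∑ i, a i • (Finsupp.single (x i) 1 - Finsupp.single (y i) 1) ∧
    c = ∑ i, a i * dist (x i) (y i)}


def IsPlanCost {M : Type*} [MetricSpace M] (f : M →₀ ℝ) (c : ℝ) : Prop :=
  ∃ (n : ℕ) (a : Fin n → ℝ) (x y : Fin n → M),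
    (∀ i, 0 ≤ a i) ∧
    f = ∑ i, a i • (Finsupp.single (x i) 1 - Finsupp.single (y i) 1) ∧
    c = ∑ i, a i * dist (x i) (y i)

lemma tcCost_eq {M : Type*} [MetricSpace M] (f : M →₀ ℝ) :
    tcCost f = sInf {c | IsPlanCost f c} := rfl

lemma IsPlanCost.nonneg {M : Type*} [MetricSpace M] {f : M →₀ ℝ} {c : ℝ}
    (h : IsPlanCost f c) : 0 ≤ c := by
  obtain ⟨n, a, x, y, ha, -, hc⟩ := h
  subst hc
  exact Finset.sum_nonneg fun i _ => mul_nonneg (ha i) dist_nonneg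

lemma bddBelow_plan {M : Type*} [MetricSpace M] (f : M →₀ ℝ) :
    BddBelow {c | IsPlanCost f c} :=
  ⟨0, fun c hc => hc.nonneg⟩

lemma tcCost_le {M : Type*} [MetricSpace M] {f : M →₀ ℝ} {c : ℝ}
    (h : IsPlanCost f c) : tcCost f ≤ c :=
  csInf_le (bddBelow_plan f) h

lemma IsPlanCost.zero {M : Type*} [MetricSpace M] : IsPlanCost (0 : M →₀ ℝ) 0 :=
  ⟨0, ![], ![], ![], by simp, by simp, by simp⟩

lemma IsPlanCost.add {M : Type*} [MetricSpace M] {f g : M →₀ ℝ} {c d : ℝ}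
    (hf : IsPlanCost f c) (hg : IsPlanCost g d) : IsPlanCost (f + g) (c + d) := by
  obtain ⟨n, a, x, y, ha, hfe, hce⟩ := hf
  obtain ⟨n', a', x', y', ha', hge, hde⟩ := hg
  refine ⟨n + n', Fin.append a a', Fin.append x x', Fin.append y y', ?_, ?_, ?_⟩
  · intro i
    induction i using Fin.addCases with
    | left i => simpa [Fin.append_left] using ha i
    | right i => simpa [Fin.append_right] using ha' i
  · rw [hfe, hge, Fin.sum_univ_add]
    simp [Fin.append_left, Fin.append_right]
  · rw [hce, hde, Fin.sum_univ_add]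
    simp [Fin.append_left, Fin.append_right]

lemma IsPlanCost.smul {M : Type*} [MetricSpace M] {f : M →₀ ℝ} {c : ℝ} (r : ℝ)
    (hr : 0 ≤ r) (hf : IsPlanCost f c) : IsPlanCost (r • f) (r * c) := by
  obtain ⟨n, a, x, y, ha, hfe, hce⟩ := hf
  refine ⟨n, fun i => r * a i, x, y, fun i => mul_nonneg hr (ha i), ?_, ?_⟩
  · rw [hfe, Finset.smul_sum]
    exact Finset.sum_congr rfl fun i _ => by rw [mul_smul]
  · rw [hce, Finset.mul_sum]
    exact Finset.sum_congr rfl fun i _ => by ring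

lemma IsPlanCost.sum {M : Type*} [MetricSpace M] {ι : Type*} (s : Finset ι)
    (F : ι → (M →₀ ℝ)) (C : ι → ℝ) (h : ∀ i ∈ s, IsPlanCost (F i) (C i)) :
    IsPlanCost (∑ i ∈ s, F i) (∑ i ∈ s, C i) := by
  induction s using Finset.cons_induction with
  | empty => simpa using IsPlanCost.zero
  | cons i s hi ih =>
    rw [Finset.sum_cons, Finset.sum_cons]
    exact (h i (Finset.mem_cons_self i s)).add (ih fun j hj => h j (Finset.mem_cons_of_mem hj))

lemma le_tcCost {M : Type*} [MetricSpace M] {f : M →₀ ℝ} {c₀ : ℝ}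
    (hne : IsPlanCost f c₀) (g : M → ℝ) (hg : ∀ x y : M, g x - g y ≤ dist x y) :
    Finsupp.linearCombination ℝ g f ≤ tcCost f := by
  rw [tcCost_eq]
  refine le_csInf ⟨c₀, hne⟩ ?_
  rintro c ⟨n, a, x, y, ha, hfe, hce⟩
  subst hce
  rw [hfe, map_sum]
  apply Finset.sum_le_sum
  intro i _
  rw [map_smul, map_sub, Finsupp.linearCombination_single, Finsupp.linearCombination_single,
    smul_eq_mul, one_smul, one_smul]
  exact mul_le_mul_of_nonneg_left (hg _ _) (ha i)

/-- The center of the face `x_i = a` of the cube `[0,1]³`. -/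
noncomputable def ctr (i : Fin 3) (a : ℝ) : Fin 3 → ℝ := fun k => if k = i then a else 1/2

/-- The midpoint of the edge `{x_i = a, x_j = b}` of the cube `[0,1]³` (for `i ≠ j`,
`a, b ∈ {0,1}`). -/
noncomputable def emid (i j : Fin 3) (a b : ℝ) : Fin 3 → ℝ :=
  fun k => if k = i then a else if k = j then b else 1/2

/-- The finite subset of the boundary of `[0,1]³` consisting, for each of the 6 faces, of
the center of the face and the midpoints of its 4 edges, i.e. all face centers and all
edge midpoints. It carries the `ℓ∞` metric inherited from `Fin 3 → ℝ`. -/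
def M3 : Set (Fin 3 → ℝ) :=
  {x | ∃ i : Fin 3, ∃ a : ℝ, (a = 0 ∨ a = 1) ∧ x = ctr i a} ∪
  {x | ∃ i j : Fin 3, ∃ a b : ℝ,
    i ≠ j ∧ (a = 0 ∨ a = 1) ∧ (b = 0 ∨ b = 1) ∧ x = emid i j a b}

lemma mem01 {b : ℝ} (hb : b ∈ ({0, 1} : Finset ℝ)) : b = 0 ∨ b = 1 := by
  rcases Finset.mem_insert.mp hb with h | h
  · exact Or.inl h
  · exact Or.inr (Finset.mem_singleton.mp h)

lemma ctr_mem (i : Fin 3) (a : ℝ) (ha : a = 0 ∨ a = 1) : ctr i a ∈ M3 :=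
  Or.inl ⟨i, a, ha, rfl⟩

lemma emid_mem (i j : Fin 3) (hij : i ≠ j) (a b : ℝ)
    (ha : a = 0 ∨ a = 1) (hb : b = 0 ∨ b = 1) : emid i j a b ∈ M3 :=
  Or.inr ⟨i, j, a, b, hij, ha, hb, rfl⟩

/-- The transportation problem `f i` on `M3`: `+1/3` at the center and `+1/6` at each
edge midpoint of the face `x_i = 0`, and `−1/3`, `−1/6` at the corresponding points of
the face `x_i = 1`. -/
noncomputable def f3 (i : Fin 3) : (M3 : Set (Fin 3 → ℝ)) →₀ ℝ :=
  (1/3 : ℝ) • (Finsupp.single (⟨ctr i 0, ctr_mem i 0 (Or.inl rfl)⟩ : M3) 1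
      - Finsupp.single (⟨ctr i 1, ctr_mem i 1 (Or.inr rfl)⟩ : M3) 1)
  + (1/6 : ℝ) • ∑ j ∈ (Finset.univ.erase i).attach, ∑ b ∈ ({0, 1} : Finset ℝ).attach,
      (Finsupp.single
          (⟨emid i j.1 0 b.1,
            emid_mem i j.1 (Finset.mem_erase.mp j.2).1.symm 0 b.1 (Or.inl rfl)
              (mem01 b.2)⟩ : M3) 1
        - Finsupp.single
          (⟨emid i j.1 1 b.1,
            emid_mem i j.1 (Finset.mem_erase.mp j.2).1.symm 1 b.1 (Or.inr rfl)
              (mem01 b.2)⟩ : M3) 1)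

/-- center point of face, as element of M3 -/
noncomputable def pC (i : Fin 3) (a : ℝ) (h : a = 0 ∨ a = 1) : M3 :=
  ⟨ctr i a, ctr_mem i a h⟩

/-- edge midpoint, as element of M3 -/
noncomputable def pE (i j : Fin 3) (h : i ≠ j) (a b : ℝ)
    (ha : a = 0 ∨ a = 1) (hb : b = 0 ∨ b = 1) : M3 :=
  ⟨emid i j a b, emid_mem i j h a b ha hb⟩

lemma pE_swap (i j : Fin 3) (h : i ≠ j) (a b : ℝ) (ha ha' hb hb') :
    pE i j h a b ha hb = pE j i h.symm b a hb' ha' := by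
  apply Subtype.ext
  show emid i j a b = emid j i b a
  funext k
  simp only [emid]
  rcases eq_or_ne k i with rfl | hki <;> rcases eq_or_ne k j with rfl | hkj <;>
    simp_all [Ne.symm]

/-- the edge-midpoint difference, guarded so `Finset.sum_attach` applies -/
noncomputable def G (i j : Fin 3) (b : ℝ) : (M3 : Set (Fin 3 → ℝ)) →₀ ℝ :=
  if h : i ≠ j ∧ (b = 0 ∨ b = 1) then
    Finsupp.single (pE i j h.1 0 b (Or.inl rfl) h.2) 1
      - Finsupp.single (pE i j h.1 1 b (Or.inr rfl) h.2) 1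
  else 0

lemma f3_eq_G (i : Fin 3) :
    f3 i = (1/3 : ℝ) • (Finsupp.single (pC i 0 (Or.inl rfl)) 1
        - Finsupp.single (pC i 1 (Or.inr rfl)) 1)
      + (1/6 : ℝ) • ∑ j ∈ Finset.univ.erase i, ∑ b ∈ ({0, 1} : Finset ℝ), G i j b := by
  rw [f3]
  congr 1
  congr 1
  rw [← Finset.sum_attach (Finset.univ.erase i) (fun j => ∑ b ∈ ({0,1} : Finset ℝ), G i j b)]
  apply Finset.sum_congr rfl
  intro j _
  rw [← Finset.sum_attach (({0,1} : Finset ℝ)) (fun b => G i j.1 b)]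
  apply Finset.sum_congr rfl
  intro b _
  rw [G, dif_pos ⟨(Finset.mem_erase.mp j.2).1.symm, mem01 b.2⟩]
  rfl

lemma pr0 : (0:ℝ) = 0 ∨ (0:ℝ) = 1 := Or.inl rfl
lemma pr1 : (1:ℝ) = 0 ∨ (1:ℝ) = 1 := Or.inr rfl
lemma h01 : (0 : Fin 3) ≠ 1 := by decide
lemma h02 : (0 : Fin 3) ≠ 2 := by decide
lemma h12 : (1 : Fin 3) ≠ 2 := by decide

lemma f3_0_eq : f3 0 =
    (1/3 : ℝ) • (Finsupp.single (pC 0 0 pr0) 1 - Finsupp.single (pC 0 1 pr1) 1)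
    + (1/6 : ℝ) • ((Finsupp.single (pE 0 1 h01 0 0 pr0 pr0) 1 - Finsupp.single (pE 0 1 h01 1 0 pr1 pr0) 1) + (Finsupp.single (pE 0 1 h01 0 1 pr0 pr1) 1 - Finsupp.single (pE 0 1 h01 1 1 pr1 pr1) 1) + (Finsupp.single (pE 0 2 h02 0 0 pr0 pr0) 1 - Finsupp.single (pE 0 2 h02 1 0 pr1 pr0) 1) + (Finsupp.single (pE 0 2 h02 0 1 pr0 pr1) 1 - Finsupp.single (pE 0 2 h02 1 1 pr1 pr1) 1)) := by
  rw [f3_eq_G]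
  rw [show Finset.univ.erase (0:Fin 3) = {1, 2} from by decide]
  rw [Finset.sum_insert (by decide), Finset.sum_singleton]
  simp only [Finset.sum_insert (by norm_num : (0:ℝ) ∉ ({1} : Finset ℝ)), Finset.sum_singleton]
  rw [G, dif_pos ⟨by decide, pr0⟩, G, dif_pos ⟨by decide, pr1⟩,
    G, dif_pos ⟨by decide, pr0⟩, G, dif_pos ⟨by decide, pr1⟩]
  module

lemma f3_1_eq : f3 1 =
    (1/3 : ℝ) • (Finsupp.single (pC 1 0 pr0) 1 - Finsupp.single (pC 1 1 pr1) 1)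
    + (1/6 : ℝ) • ((Finsupp.single (pE 0 1 h01 0 0 pr0 pr0) 1 - Finsupp.single (pE 0 1 h01 0 1 pr0 pr1) 1) + (Finsupp.single (pE 0 1 h01 1 0 pr1 pr0) 1 - Finsupp.single (pE 0 1 h01 1 1 pr1 pr1) 1) + (Finsupp.single (pE 1 2 h12 0 0 pr0 pr0) 1 - Finsupp.single (pE 1 2 h12 1 0 pr1 pr0) 1) + (Finsupp.single (pE 1 2 h12 0 1 pr0 pr1) 1 - Finsupp.single (pE 1 2 h12 1 1 pr1 pr1) 1)) := by
  rw [f3_eq_G]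
  rw [show Finset.univ.erase (1:Fin 3) = {0, 2} from by decide]
  rw [Finset.sum_insert (by decide), Finset.sum_singleton]
  simp only [Finset.sum_insert (by norm_num : (0:ℝ) ∉ ({1} : Finset ℝ)), Finset.sum_singleton]
  rw [G, dif_pos ⟨by decide, pr0⟩, G, dif_pos ⟨by decide, pr1⟩,
    G, dif_pos ⟨by decide, pr0⟩, G, dif_pos ⟨by decide, pr1⟩]
  rw [pE_swap 1 0 (by decide) 0 0 pr0 pr0 pr0 pr0, pE_swap 1 0 (by decide) 1 0 pr1 pr1 pr0 pr0,
    pE_swap 1 0 (by decide) 0 1 pr0 pr0 pr1 pr1, pE_swap 1 0 (by decide) 1 1 pr1 pr1 pr1 pr1]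
  module

lemma f3_2_eq : f3 2 =
    (1/3 : ℝ) • (Finsupp.single (pC 2 0 pr0) 1 - Finsupp.single (pC 2 1 pr1) 1)
    + (1/6 : ℝ) • ((Finsupp.single (pE 0 2 h02 0 0 pr0 pr0) 1 - Finsupp.single (pE 0 2 h02 0 1 pr0 pr1) 1) + (Finsupp.single (pE 0 2 h02 1 0 pr1 pr0) 1 - Finsupp.single (pE 0 2 h02 1 1 pr1 pr1) 1) + (Finsupp.single (pE 1 2 h12 0 0 pr0 pr0) 1 - Finsupp.single (pE 1 2 h12 0 1 pr0 pr1) 1) + (Finsupp.single (pE 1 2 h12 1 0 pr1 pr0) 1 - Finsupp.single (pE 1 2 h12 1 1 pr1 pr1) 1)) := by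
  rw [f3_eq_G]
  rw [show Finset.univ.erase (2:Fin 3) = {0, 1} from by decide]
  rw [Finset.sum_insert (by decide), Finset.sum_singleton]
  simp only [Finset.sum_insert (by norm_num : (0:ℝ) ∉ ({1} : Finset ℝ)), Finset.sum_singleton]
  rw [G, dif_pos ⟨by decide, pr0⟩, G, dif_pos ⟨by decide, pr1⟩,
    G, dif_pos ⟨by decide, pr0⟩, G, dif_pos ⟨by decide, pr1⟩]
  rw [pE_swap 2 0 (by decide) 0 0 pr0 pr0 pr0 pr0, pE_swap 2 0 (by decide) 1 0 pr1 pr1 pr0 pr0,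
    pE_swap 2 0 (by decide) 0 1 pr0 pr0 pr1 pr1, pE_swap 2 0 (by decide) 1 1 pr1 pr1 pr1 pr1,
    pE_swap 2 1 (by decide) 0 0 pr0 pr0 pr0 pr0, pE_swap 2 1 (by decide) 1 0 pr1 pr1 pr0 pr0,
    pE_swap 2 1 (by decide) 0 1 pr0 pr0 pr1 pr1, pE_swap 2 1 (by decide) 1 1 pr1 pr1 pr1 pr1]
  module

lemma dist_pC_pE (c j k : Fin 3) (hjk : j ≠ k) (hcj : c ≠ j) (hck : c ≠ k)
    (hcover : ∀ i : Fin 3, i = c ∨ i = j ∨ i = k)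
    (s a b : ℝ) (hs : s = 0 ∨ s = 1) (ha : a = 0 ∨ a = 1) (hb : b = 0 ∨ b = 1) :
    dist (pC c s hs) (pE j k hjk a b ha hb) = 1/2 := by
  rw [Subtype.dist_eq]
  show dist (ctr c s) (emid j k a b) = 1/2
  apply le_antisymm
  · rw [dist_pi_le_iff (by norm_num)]
    intro i
    rcases hcover i with rfl | rfl | rfl
    · simp only [ctr, emid, if_pos rfl, if_neg hcj, if_neg hck]
      rcases hs with rfl | rfl <;> norm_num [Real.dist_eq, abs_le]
    · simp only [ctr, emid, if_pos rfl, if_neg hcj.symm]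
      rcases ha with rfl | rfl <;> norm_num [Real.dist_eq, abs_le]
    · simp only [ctr, emid, if_pos rfl, if_neg hck.symm, if_neg hjk.symm]
      rcases hb with rfl | rfl <;> norm_num [Real.dist_eq, abs_le]
  · have h := dist_le_pi_dist (ctr c s) (emid j k a b) c
    have : dist (ctr c s c) (emid j k a b c) = 1/2 := by
      simp only [ctr, emid, if_pos rfl, if_neg hcj, if_neg hck]
      rcases hs with rfl | rfl <;> norm_num [Real.dist_eq]
    linarith

lemma dist_pE_pC (c j k : Fin 3) (hjk : j ≠ k) (hcj : c ≠ j) (hck : c ≠ k)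
    (hcover : ∀ i : Fin 3, i = c ∨ i = j ∨ i = k)
    (s a b : ℝ) (hs : s = 0 ∨ s = 1) (ha : a = 0 ∨ a = 1) (hb : b = 0 ∨ b = 1) :
    dist (pE j k hjk a b ha hb) (pC c s hs) = 1/2 := by
  rw [dist_comm]; exact dist_pC_pE c j k hjk hcj hck hcover s a b hs ha hb

lemma isPlanCost_move {M : Type*} [MetricSpace M] (x y : M) (r : ℝ) (hr : 0 ≤ r) :
    IsPlanCost (r • (Finsupp.single x 1 - Finsupp.single y 1)) (r * dist x y) :=
  ⟨1, fun _ => r, fun _ => x, fun _ => y, fun _ => hr, by simp, by simp⟩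

lemma plan_case_ppp : IsPlanCost ((1 : ℝ) • f3 0 + (1 : ℝ) • f3 1 + (1 : ℝ) • f3 2) 1 := by
  have m0 := isPlanCost_move (M := M3) (pC 0 0 pr0) (pE 1 2 h12 1 1 pr1 pr1) (1/3) (by norm_num)
  have m1 := isPlanCost_move (M := M3) (pE 1 2 h12 0 0 pr0 pr0) (pC 0 1 pr1) (1/3) (by norm_num)
  have m2 := isPlanCost_move (M := M3) (pC 1 0 pr0) (pE 0 2 h02 1 1 pr1 pr1) (1/3) (by norm_num)
  have m3 := isPlanCost_move (M := M3) (pE 0 2 h02 0 0 pr0 pr0) (pC 1 1 pr1) (1/3) (by norm_num)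
  have m4 := isPlanCost_move (M := M3) (pC 2 0 pr0) (pE 0 1 h01 1 1 pr1 pr1) (1/3) (by norm_num)
  have m5 := isPlanCost_move (M := M3) (pE 0 1 h01 0 0 pr0 pr0) (pC 2 1 pr1) (1/3) (by norm_num)
  have d0 : dist (pC 0 0 pr0) (pE 1 2 h12 1 1 pr1 pr1) = 1/2 := dist_pC_pE 0 1 2 h12 (by decide) (by decide) (by decide) 0 1 1 pr0 pr1 pr1
  have d1 : dist (pE 1 2 h12 0 0 pr0 pr0) (pC 0 1 pr1) = 1/2 := dist_pE_pC 0 1 2 h12 (by decide) (by decide) (by decide) 1 0 0 pr1 pr0 pr0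
  have d2 : dist (pC 1 0 pr0) (pE 0 2 h02 1 1 pr1 pr1) = 1/2 := dist_pC_pE 1 0 2 h02 (by decide) (by decide) (by decide) 0 1 1 pr0 pr1 pr1
  have d3 : dist (pE 0 2 h02 0 0 pr0 pr0) (pC 1 1 pr1) = 1/2 := dist_pE_pC 1 0 2 h02 (by decide) (by decide) (by decide) 1 0 0 pr1 pr0 pr0
  have d4 : dist (pC 2 0 pr0) (pE 0 1 h01 1 1 pr1 pr1) = 1/2 := dist_pC_pE 2 0 1 h01 (by decide) (by decide) (by decide) 0 1 1 pr0 pr1 pr1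
  have d5 : dist (pE 0 1 h01 0 0 pr0 pr0) (pC 2 1 pr1) = 1/2 := dist_pE_pC 2 0 1 h01 (by decide) (by decide) (by decide) 1 0 0 pr1 pr0 pr0
  have H := ((((m0.add m1).add m2).add m3).add m4).add m5
  rw [d0, d1, d2, d3, d4, d5] at H
  norm_num at H
  have hf : (1 : ℝ) • f3 0 + (1 : ℝ) • f3 1 + (1 : ℝ) • f3 2 = (1/3 : ℝ) • (Finsupp.single (pC 0 0 pr0) 1 - Finsupp.single (pE 1 2 h12 1 1 pr1 pr1) 1) + (1/3 : ℝ) • (Finsupp.single (pE 1 2 h12 0 0 pr0 pr0) 1 - Finsupp.single (pC 0 1 pr1) 1) + (1/3 : ℝ) • (Finsupp.single (pC 1 0 pr0) 1 - Finsupp.single (pE 0 2 h02 1 1 pr1 pr1) 1) + (1/3 : ℝ) • (Finsupp.single (pE 0 2 h02 0 0 pr0 pr0) 1 - Finsupp.single (pC 1 1 pr1) 1) + (1/3 : ℝ) • (Finsupp.single (pC 2 0 pr0) 1 - Finsupp.single (pE 0 1 h01 1 1 pr1 pr1) 1) + (1/3 : ℝ) • (Finsupp.single (pE 0 1 h01 0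 0 pr0 pr0) 1 - Finsupp.single (pC 2 1 pr1) 1) := by
    rw [f3_0_eq, f3_1_eq, f3_2_eq]
    module
  rw [hf]
  exact H

lemma plan_case_ppm : IsPlanCost ((1 : ℝ) • f3 0 + (1 : ℝ) • f3 1 + (-1 : ℝ) • f3 2) 1 := by
  have m0 := isPlanCost_move (M := M3) (pC 0 0 pr0) (pE 1 2 h12 1 0 pr1 pr0) (1/3) (by norm_num)
  have m1 := isPlanCost_move (M := M3) (pE 1 2 h12 0 1 pr0 pr1) (pC 0 1 pr1) (1/3) (by norm_num)
  have m2 := isPlanCost_move (M := M3) (pC 1 0 pr0) (pE 0 2 h02 1 0 pr1 pr0) (1/3) (by norm_num)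
  have m3 := isPlanCost_move (M := M3) (pE 0 2 h02 0 1 pr0 pr1) (pC 1 1 pr1) (1/3) (by norm_num)
  have m4 := isPlanCost_move (M := M3) (pC 2 1 pr1) (pE 0 1 h01 1 1 pr1 pr1) (1/3) (by norm_num)
  have m5 := isPlanCost_move (M := M3) (pE 0 1 h01 0 0 pr0 pr0) (pC 2 0 pr0) (1/3) (by norm_num)
  have d0 : dist (pC 0 0 pr0) (pE 1 2 h12 1 0 pr1 pr0) = 1/2 := dist_pC_pE 0 1 2 h12 (by decide) (by decide) (by decide) 0 1 0 pr0 pr1 pr0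
  have d1 : dist (pE 1 2 h12 0 1 pr0 pr1) (pC 0 1 pr1) = 1/2 := dist_pE_pC 0 1 2 h12 (by decide) (by decide) (by decide) 1 0 1 pr1 pr0 pr1
  have d2 : dist (pC 1 0 pr0) (pE 0 2 h02 1 0 pr1 pr0) = 1/2 := dist_pC_pE 1 0 2 h02 (by decide) (by decide) (by decide) 0 1 0 pr0 pr1 pr0
  have d3 : dist (pE 0 2 h02 0 1 pr0 pr1) (pC 1 1 pr1) = 1/2 := dist_pE_pC 1 0 2 h02 (by decide) (by decide) (by decide) 1 0 1 pr1 pr0 pr1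
  have d4 : dist (pC 2 1 pr1) (pE 0 1 h01 1 1 pr1 pr1) = 1/2 := dist_pC_pE 2 0 1 h01 (by decide) (by decide) (by decide) 1 1 1 pr1 pr1 pr1
  have d5 : dist (pE 0 1 h01 0 0 pr0 pr0) (pC 2 0 pr0) = 1/2 := dist_pE_pC 2 0 1 h01 (by decide) (by decide) (by decide) 0 0 0 pr0 pr0 pr0
  have H := ((((m0.add m1).add m2).add m3).add m4).add m5
  rw [d0, d1, d2, d3, d4, d5] at H
  norm_num at H
  have hf : (1 : ℝ) • f3 0 + (1 : ℝ) • f3 1 + (-1 : ℝ) • f3 2 = (1/3 : ℝ) • (Finsupp.single (pC 0 0 pr0) 1 - Finsupp.single (pE 1 2 h12 1 0 pr1 pr0) 1) + (1/3 : ℝ) • (Finsupp.single (pE 1 2 h12 0 1 pr0 pr1) 1 - Finsupp.single (pC 0 1 pr1) 1) + (1/3 : ℝ) • (Finsupp.single (pC 1 0 pr0) 1 - Finsupp.single (pE 0 2 h02 1 0 pr1 pr0) 1) + (1/3 : ℝ) • (Finsupp.single (pE 0 2 h02 0 1 pr0 pr1) 1 - Finsupp.single (pC 1 1 pr1) 1)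 + (1/3 : ℝ) • (Finsupp.single (pC 2 1 pr1) 1 - Finsupp.single (pE 0 1 h01 1 1 pr1 pr1) 1) + (1/3 : ℝ) • (Finsupp.single (pE 0 1 h01 0 0 pr0 pr0) 1 - Finsupp.single (pC 2 0 pr0) 1) := by
    rw [f3_0_eq, f3_1_eq, f3_2_eq]
    module
  rw [hf]
  exact H

lemma plan_case_pmp : IsPlanCost ((1 : ℝ) • f3 0 + (-1 : ℝ) • f3 1 + (1 : ℝ) • f3 2) 1 := by
  have m0 := isPlanCost_move (M := M3) (pC 0 0 pr0) (pE 1 2 h12 0 1 pr0 pr1) (1/3) (by norm_num)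
  have m1 := isPlanCost_move (M := M3) (pE 1 2 h12 1 0 pr1 pr0) (pC 0 1 pr1) (1/3) (by norm_num)
  have m2 := isPlanCost_move (M := M3) (pC 1 1 pr1) (pE 0 2 h02 1 1 pr1 pr1) (1/3) (by norm_num)
  have m3 := isPlanCost_move (M := M3) (pE 0 2 h02 0 0 pr0 pr0) (pC 1 0 pr0) (1/3) (by norm_num)
  have m4 := isPlanCost_move (M := M3) (pC 2 0 pr0) (pE 0 1 h01 1 0 pr1 pr0) (1/3) (by norm_num)
  have m5 := isPlanCost_move (M := M3) (pE 0 1 h01 0 1 pr0 pr1) (pC 2 1 pr1) (1/3) (by norm_num)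
  have d0 : dist (pC 0 0 pr0) (pE 1 2 h12 0 1 pr0 pr1) = 1/2 := dist_pC_pE 0 1 2 h12 (by decide) (by decide) (by decide) 0 0 1 pr0 pr0 pr1
  have d1 : dist (pE 1 2 h12 1 0 pr1 pr0) (pC 0 1 pr1) = 1/2 := dist_pE_pC 0 1 2 h12 (by decide) (by decide) (by decide) 1 1 0 pr1 pr1 pr0
  have d2 : dist (pC 1 1 pr1) (pE 0 2 h02 1 1 pr1 pr1) = 1/2 := dist_pC_pE 1 0 2 h02 (by decide) (by decide) (by decide) 1 1 1 pr1 pr1 pr1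
  have d3 : dist (pE 0 2 h02 0 0 pr0 pr0) (pC 1 0 pr0) = 1/2 := dist_pE_pC 1 0 2 h02 (by decide) (by decide) (by decide) 0 0 0 pr0 pr0 pr0
  have d4 : dist (pC 2 0 pr0) (pE 0 1 h01 1 0 pr1 pr0) = 1/2 := dist_pC_pE 2 0 1 h01 (by decide) (by decide) (by decide) 0 1 0 pr0 pr1 pr0
  have d5 : dist (pE 0 1 h01 0 1 pr0 pr1) (pC 2 1 pr1) = 1/2 := dist_pE_pC 2 0 1 h01 (by decide) (by decide) (by decide) 1 0 1 pr1 pr0 pr1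
  have H := ((((m0.add m1).add m2).add m3).add m4).add m5
  rw [d0, d1, d2, d3, d4, d5] at H
  norm_num at H
  have hf : (1 : ℝ) • f3 0 + (-1 : ℝ) • f3 1 + (1 : ℝ) • f3 2 = (1/3 : ℝ) • (Finsupp.single (pC 0 0 pr0) 1 - Finsupp.single (pE 1 2 h12 0 1 pr0 pr1) 1) + (1/3 : ℝ) • (Finsupp.single (pE 1 2 h12 1 0 pr1 pr0) 1 - Finsupp.single (pC 0 1 pr1) 1) + (1/3 : ℝ) • (Finsupp.single (pC 1 1 pr1) 1 - Finsupp.single (pE 0 2 h02 1 1 pr1 pr1) 1) + (1/3 : ℝ) • (Finsupp.single (pE 0 2 h02 0 0 pr0 pr0) 1 - Finsupp.single (pC 1 0 pr0) 1) + (1/3 : ℝ) • (Finsupp.single (pC 2 0 pr0) 1 - Finsupp.single (pE 0 1 h01 1 0 pr1 pr0) 1) + (1/3 : ℝ) • (Finsupp.single (pE 0 1 h01 0 1 pr0 pr1) 1 - Finsupp.single (pC 2 1 pr1) 1) := by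
    rw [f3_0_eq, f3_1_eq, f3_2_eq]
    module
  rw [hf]
  exact H

lemma plan_case_pmm : IsPlanCost ((1 : ℝ) • f3 0 + (-1 : ℝ) • f3 1 + (-1 : ℝ) • f3 2) 1 := by
  have m0 := isPlanCost_move (M := M3) (pC 0 0 pr0) (pE 1 2 h12 0 0 pr0 pr0) (1/3) (by norm_num)
  have m1 := isPlanCost_move (M := M3) (pE 1 2 h12 1 1 pr1 pr1) (pC 0 1 pr1) (1/3) (by norm_num)
  have m2 := isPlanCost_move (M := M3) (pC 1 1 pr1) (pE 0 2 h02 1 0 pr1 pr0) (1/3) (by norm_num)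
  have m3 := isPlanCost_move (M := M3) (pE 0 2 h02 0 1 pr0 pr1) (pC 1 0 pr0) (1/3) (by norm_num)
  have m4 := isPlanCost_move (M := M3) (pC 2 1 pr1) (pE 0 1 h01 1 0 pr1 pr0) (1/3) (by norm_num)
  have m5 := isPlanCost_move (M := M3) (pE 0 1 h01 0 1 pr0 pr1) (pC 2 0 pr0) (1/3) (by norm_num)
  have d0 : dist (pC 0 0 pr0) (pE 1 2 h12 0 0 pr0 pr0) = 1/2 := dist_pC_pE 0 1 2 h12 (by decide) (by decide) (by decide) 0 0 0 pr0 pr0 pr0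
  have d1 : dist (pE 1 2 h12 1 1 pr1 pr1) (pC 0 1 pr1) = 1/2 := dist_pE_pC 0 1 2 h12 (by decide) (by decide) (by decide) 1 1 1 pr1 pr1 pr1
  have d2 : dist (pC 1 1 pr1) (pE 0 2 h02 1 0 pr1 pr0) = 1/2 := dist_pC_pE 1 0 2 h02 (by decide) (by decide) (by decide) 1 1 0 pr1 pr1 pr0
  have d3 : dist (pE 0 2 h02 0 1 pr0 pr1) (pC 1 0 pr0) = 1/2 := dist_pE_pC 1 0 2 h02 (by decide) (by decide) (by decide) 0 0 1 pr0 pr0 pr1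
  have d4 : dist (pC 2 1 pr1) (pE 0 1 h01 1 0 pr1 pr0) = 1/2 := dist_pC_pE 2 0 1 h01 (by decide) (by decide) (by decide) 1 1 0 pr1 pr1 pr0
  have d5 : dist (pE 0 1 h01 0 1 pr0 pr1) (pC 2 0 pr0) = 1/2 := dist_pE_pC 2 0 1 h01 (by decide) (by decide) (by decide) 0 0 1 pr0 pr0 pr1
  have H := ((((m0.add m1).add m2).add m3).add m4).add m5
  rw [d0, d1, d2, d3, d4, d5] at H
  norm_num at H
  have hf : (1 : ℝ) • f3 0 + (-1 : ℝ) • f3 1 + (-1 : ℝ) • f3 2 = (1/3 : ℝ) • (Finsupp.single (pC 0 0 pr0) 1 - Finsupp.single (pE 1 2 h12 0 0 pr0 pr0) 1) + (1/3 : ℝ) • (Finsupp.single (pE 1 2 h12 1 1 pr1 pr1) 1 - Finsupp.single (pC 0 1 pr1) 1) + (1/3 : ℝ) • (Finsupp.single (pC 1 1 pr1) 1 - Finsupp.single (pE 0 2 h02 1 0 pr1 pr0) 1) + (1/3 : ℝ) • (Finsupp.single (pE 0 2 h02 0 1 pr0 pr1) 1 - Finsupp.single (pC 1 0 pr0) 1)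 + (1/3 : ℝ) • (Finsupp.single (pC 2 1 pr1) 1 - Finsupp.single (pE 0 1 h01 1 0 pr1 pr0) 1) + (1/3 : ℝ) • (Finsupp.single (pE 0 1 h01 0 1 pr0 pr1) 1 - Finsupp.single (pC 2 0 pr0) 1) := by
    rw [f3_0_eq, f3_1_eq, f3_2_eq]
    module
  rw [hf]
  exact H

lemma plan_case_mpp : IsPlanCost ((-1 : ℝ) • f3 0 + (1 : ℝ) • f3 1 + (1 : ℝ) • f3 2) 1 := by
  have m0 := isPlanCost_move (M := M3) (pC 0 1 pr1) (pE 1 2 h12 1 1 pr1 pr1) (1/3) (by norm_num)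
  have m1 := isPlanCost_move (M := M3) (pE 1 2 h12 0 0 pr0 pr0) (pC 0 0 pr0) (1/3) (by norm_num)
  have m2 := isPlanCost_move (M := M3) (pC 1 0 pr0) (pE 0 2 h02 0 1 pr0 pr1) (1/3) (by norm_num)
  have m3 := isPlanCost_move (M := M3) (pE 0 2 h02 1 0 pr1 pr0) (pC 1 1 pr1) (1/3) (by norm_num)
  have m4 := isPlanCost_move (M := M3) (pC 2 0 pr0) (pE 0 1 h01 0 1 pr0 pr1) (1/3) (by norm_num)
  have m5 := isPlanCost_move (M := M3) (pE 0 1 h01 1 0 pr1 pr0) (pC 2 1 pr1) (1/3) (by norm_num)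
  have d0 : dist (pC 0 1 pr1) (pE 1 2 h12 1 1 pr1 pr1) = 1/2 := dist_pC_pE 0 1 2 h12 (by decide) (by decide) (by decide) 1 1 1 pr1 pr1 pr1
  have d1 : dist (pE 1 2 h12 0 0 pr0 pr0) (pC 0 0 pr0) = 1/2 := dist_pE_pC 0 1 2 h12 (by decide) (by decide) (by decide) 0 0 0 pr0 pr0 pr0
  have d2 : dist (pC 1 0 pr0) (pE 0 2 h02 0 1 pr0 pr1) = 1/2 := dist_pC_pE 1 0 2 h02 (by decide) (by decide) (by decide) 0 0 1 pr0 pr0 pr1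
  have d3 : dist (pE 0 2 h02 1 0 pr1 pr0) (pC 1 1 pr1) = 1/2 := dist_pE_pC 1 0 2 h02 (by decide) (by decide) (by decide) 1 1 0 pr1 pr1 pr0
  have d4 : dist (pC 2 0 pr0) (pE 0 1 h01 0 1 pr0 pr1) = 1/2 := dist_pC_pE 2 0 1 h01 (by decide) (by decide) (by decide) 0 0 1 pr0 pr0 pr1
  have d5 : dist (pE 0 1 h01 1 0 pr1 pr0) (pC 2 1 pr1) = 1/2 := dist_pE_pC 2 0 1 h01 (by decide) (by decide) (by decide) 1 1 0 pr1 pr1 pr0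
  have H := ((((m0.add m1).add m2).add m3).add m4).add m5
  rw [d0, d1, d2, d3, d4, d5] at H
  norm_num at H
  have hf : (-1 : ℝ) • f3 0 + (1 : ℝ) • f3 1 + (1 : ℝ) • f3 2 = (1/3 : ℝ) • (Finsupp.single (pC 0 1 pr1) 1 - Finsupp.single (pE 1 2 h12 1 1 pr1 pr1) 1) + (1/3 : ℝ) • (Finsupp.single (pE 1 2 h12 0 0 pr0 pr0) 1 - Finsupp.single (pC 0 0 pr0) 1) + (1/3 : ℝ) • (Finsupp.single (pC 1 0 pr0) 1 - Finsupp.single (pE 0 2 h02 0 1 pr0 pr1) 1) + (1/3 : ℝ) • (Finsupp.single (pE 0 2 h02 1 0 pr1 pr0) 1 - Finsupp.single (pC 1 1 pr1) 1) + (1/3 : ℝ) • (Finsupp.single (pC 2 0 pr0) 1 - Finsupp.single (pE 0 1 h01 0 1 pr0 pr1) 1) + (1/3 : ℝ) • (Finsupp.single (pE 0 1 h01 1 0 pr1 pr0) 1 - Finsupp.single (pC 2 1 pr1) 1) := by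
    rw [f3_0_eq, f3_1_eq, f3_2_eq]
    module
  rw [hf]
  exact H

lemma plan_case_mpm : IsPlanCost ((-1 : ℝ) • f3 0 + (1 : ℝ) • f3 1 + (-1 : ℝ) • f3 2) 1 := by
  have m0 := isPlanCost_move (M := M3) (pC 0 1 pr1) (pE 1 2 h12 1 0 pr1 pr0) (1/3) (by norm_num)
  have m1 := isPlanCost_move (M := M3) (pE 1 2 h12 0 1 pr0 pr1) (pC 0 0 pr0) (1/3) (by norm_num)
  have m2 := isPlanCost_move (M := M3) (pC 1 0 pr0) (pE 0 2 h02 0 0 pr0 pr0) (1/3) (by norm_num)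
  have m3 := isPlanCost_move (M := M3) (pE 0 2 h02 1 1 pr1 pr1) (pC 1 1 pr1) (1/3) (by norm_num)
  have m4 := isPlanCost_move (M := M3) (pC 2 1 pr1) (pE 0 1 h01 0 1 pr0 pr1) (1/3) (by norm_num)
  have m5 := isPlanCost_move (M := M3) (pE 0 1 h01 1 0 pr1 pr0) (pC 2 0 pr0) (1/3) (by norm_num)
  have d0 : dist (pC 0 1 pr1) (pE 1 2 h12 1 0 pr1 pr0) = 1/2 := dist_pC_pE 0 1 2 h12 (by decide) (by decide) (by decide) 1 1 0 pr1 pr1 pr0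
  have d1 : dist (pE 1 2 h12 0 1 pr0 pr1) (pC 0 0 pr0) = 1/2 := dist_pE_pC 0 1 2 h12 (by decide) (by decide) (by decide) 0 0 1 pr0 pr0 pr1
  have d2 : dist (pC 1 0 pr0) (pE 0 2 h02 0 0 pr0 pr0) = 1/2 := dist_pC_pE 1 0 2 h02 (by decide) (by decide) (by decide) 0 0 0 pr0 pr0 pr0
  have d3 : dist (pE 0 2 h02 1 1 pr1 pr1) (pC 1 1 pr1) = 1/2 := dist_pE_pC 1 0 2 h02 (by decide) (by decide) (by decide) 1 1 1 pr1 pr1 pr1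
  have d4 : dist (pC 2 1 pr1) (pE 0 1 h01 0 1 pr0 pr1) = 1/2 := dist_pC_pE 2 0 1 h01 (by decide) (by decide) (by decide) 1 0 1 pr1 pr0 pr1
  have d5 : dist (pE 0 1 h01 1 0 pr1 pr0) (pC 2 0 pr0) = 1/2 := dist_pE_pC 2 0 1 h01 (by decide) (by decide) (by decide) 0 1 0 pr0 pr1 pr0
  have H := ((((m0.add m1).add m2).add m3).add m4).add m5
  rw [d0, d1, d2, d3, d4, d5] at H
  norm_num at H
  have hf : (-1 : ℝ) • f3 0 + (1 : ℝ) • f3 1 + (-1 : ℝ) • f3 2 = (1/3 : ℝ) • (Finsupp.single (pC 0 1 pr1) 1 - Finsupp.single (pE 1 2 h12 1 0 pr1 pr0) 1) + (1/3 : ℝ) • (Finsupp.single (pE 1 2 h12 0 1 pr0 pr1) 1 - Finsupp.single (pC 0 0 pr0) 1) + (1/3 : ℝ) • (Finsupp.single (pC 1 0 pr0) 1 - Finsupp.single (pE 0 2 h02 0 0 pr0 pr0) 1) + (1/3 : ℝ) • (Finsupp.single (pE 0 2 h02 1 1 pr1 pr1) 1 - Finsupp.single (pC 1 1 pr1) 1)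 + (1/3 : ℝ) • (Finsupp.single (pC 2 1 pr1) 1 - Finsupp.single (pE 0 1 h01 0 1 pr0 pr1) 1) + (1/3 : ℝ) • (Finsupp.single (pE 0 1 h01 1 0 pr1 pr0) 1 - Finsupp.single (pC 2 0 pr0) 1) := by
    rw [f3_0_eq, f3_1_eq, f3_2_eq]
    module
  rw [hf]
  exact H

lemma plan_case_mmp : IsPlanCost ((-1 : ℝ) • f3 0 + (-1 : ℝ) • f3 1 + (1 : ℝ) • f3 2) 1 := by
  have m0 := isPlanCost_move (M := M3) (pC 0 1 pr1) (pE 1 2 h12 0 1 pr0 pr1) (1/3) (by norm_num)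
  have m1 := isPlanCost_move (M := M3) (pE 1 2 h12 1 0 pr1 pr0) (pC 0 0 pr0) (1/3) (by norm_num)
  have m2 := isPlanCost_move (M := M3) (pC 1 1 pr1) (pE 0 2 h02 0 1 pr0 pr1) (1/3) (by norm_num)
  have m3 := isPlanCost_move (M := M3) (pE 0 2 h02 1 0 pr1 pr0) (pC 1 0 pr0) (1/3) (by norm_num)
  have m4 := isPlanCost_move (M := M3) (pC 2 0 pr0) (pE 0 1 h01 0 0 pr0 pr0) (1/3) (by norm_num)
  have m5 := isPlanCost_move (M := M3) (pE 0 1 h01 1 1 pr1 pr1) (pC 2 1 pr1) (1/3) (by norm_num)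
  have d0 : dist (pC 0 1 pr1) (pE 1 2 h12 0 1 pr0 pr1) = 1/2 := dist_pC_pE 0 1 2 h12 (by decide) (by decide) (by decide) 1 0 1 pr1 pr0 pr1
  have d1 : dist (pE 1 2 h12 1 0 pr1 pr0) (pC 0 0 pr0) = 1/2 := dist_pE_pC 0 1 2 h12 (by decide) (by decide) (by decide) 0 1 0 pr0 pr1 pr0
  have d2 : dist (pC 1 1 pr1) (pE 0 2 h02 0 1 pr0 pr1) = 1/2 := dist_pC_pE 1 0 2 h02 (by decide) (by decide) (by decide) 1 0 1 pr1 pr0 pr1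
  have d3 : dist (pE 0 2 h02 1 0 pr1 pr0) (pC 1 0 pr0) = 1/2 := dist_pE_pC 1 0 2 h02 (by decide) (by decide) (by decide) 0 1 0 pr0 pr1 pr0
  have d4 : dist (pC 2 0 pr0) (pE 0 1 h01 0 0 pr0 pr0) = 1/2 := dist_pC_pE 2 0 1 h01 (by decide) (by decide) (by decide) 0 0 0 pr0 pr0 pr0
  have d5 : dist (pE 0 1 h01 1 1 pr1 pr1) (pC 2 1 pr1) = 1/2 := dist_pE_pC 2 0 1 h01 (by decide) (by decide) (by decide) 1 1 1 pr1 pr1 pr1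
  have H := ((((m0.add m1).add m2).add m3).add m4).add m5
  rw [d0, d1, d2, d3, d4, d5] at H
  norm_num at H
  have hf : (-1 : ℝ) • f3 0 + (-1 : ℝ) • f3 1 + (1 : ℝ) • f3 2 = (1/3 : ℝ) • (Finsupp.single (pC 0 1 pr1) 1 - Finsupp.single (pE 1 2 h12 0 1 pr0 pr1) 1) + (1/3 : ℝ) • (Finsupp.single (pE 1 2 h12 1 0 pr1 pr0) 1 - Finsupp.single (pC 0 0 pr0) 1) + (1/3 : ℝ) • (Finsupp.single (pC 1 1 pr1) 1 - Finsupp.single (pE 0 2 h02 0 1 pr0 pr1) 1) + (1/3 : ℝ) • (Finsupp.single (pE 0 2 h02 1 0 pr1 pr0) 1 - Finsupp.single (pC 1 0 pr0) 1) + (1/3 : ℝ) • (Finsupp.single (pC 2 0 pr0) 1 - Finsupp.single (pE 0 1 h01 0 0 pr0 pr0) 1) + (1/3 : ℝ) • (Finsupp.single (pE 0 1 h01 1 1 pr1 pr1) 1 - Finsupp.single (pC 2 1 pr1) 1) := by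
    rw [f3_0_eq, f3_1_eq, f3_2_eq]
    module
  rw [hf]
  exact H

lemma plan_case_mmm : IsPlanCost ((-1 : ℝ) • f3 0 + (-1 : ℝ) • f3 1 + (-1 : ℝ) • f3 2) 1 := by
  have m0 := isPlanCost_move (M := M3) (pC 0 1 pr1) (pE 1 2 h12 0 0 pr0 pr0) (1/3) (by norm_num)
  have m1 := isPlanCost_move (M := M3) (pE 1 2 h12 1 1 pr1 pr1) (pC 0 0 pr0) (1/3) (by norm_num)
  have m2 := isPlanCost_move (M := M3) (pC 1 1 pr1) (pE 0 2 h02 0 0 pr0 pr0) (1/3) (by norm_num)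
  have m3 := isPlanCost_move (M := M3) (pE 0 2 h02 1 1 pr1 pr1) (pC 1 0 pr0) (1/3) (by norm_num)
  have m4 := isPlanCost_move (M := M3) (pC 2 1 pr1) (pE 0 1 h01 0 0 pr0 pr0) (1/3) (by norm_num)
  have m5 := isPlanCost_move (M := M3) (pE 0 1 h01 1 1 pr1 pr1) (pC 2 0 pr0) (1/3) (by norm_num)
  have d0 : dist (pC 0 1 pr1) (pE 1 2 h12 0 0 pr0 pr0) = 1/2 := dist_pC_pE 0 1 2 h12 (by decide) (by decide) (by decide) 1 0 0 pr1 pr0 pr0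
  have d1 : dist (pE 1 2 h12 1 1 pr1 pr1) (pC 0 0 pr0) = 1/2 := dist_pE_pC 0 1 2 h12 (by decide) (by decide) (by decide) 0 1 1 pr0 pr1 pr1
  have d2 : dist (pC 1 1 pr1) (pE 0 2 h02 0 0 pr0 pr0) = 1/2 := dist_pC_pE 1 0 2 h02 (by decide) (by decide) (by decide) 1 0 0 pr1 pr0 pr0
  have d3 : dist (pE 0 2 h02 1 1 pr1 pr1) (pC 1 0 pr0) = 1/2 := dist_pE_pC 1 0 2 h02 (by decide) (by decide) (by decide) 0 1 1 pr0 pr1 pr1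
  have d4 : dist (pC 2 1 pr1) (pE 0 1 h01 0 0 pr0 pr0) = 1/2 := dist_pC_pE 2 0 1 h01 (by decide) (by decide) (by decide) 1 0 0 pr1 pr0 pr0
  have d5 : dist (pE 0 1 h01 1 1 pr1 pr1) (pC 2 0 pr0) = 1/2 := dist_pE_pC 2 0 1 h01 (by decide) (by decide) (by decide) 0 1 1 pr0 pr1 pr1
  have H := ((((m0.add m1).add m2).add m3).add m4).add m5
  rw [d0, d1, d2, d3, d4, d5] at H
  norm_num at H
  have hf : (-1 : ℝ) • f3 0 + (-1 : ℝ) • f3 1 + (-1 : ℝ) • f3 2 = (1/3 : ℝ) • (Finsupp.single (pC 0 1 pr1) 1 - Finsupp.single (pE 1 2 h12 0 0 pr0 pr0) 1) + (1/3 : ℝ) • (Finsupp.single (pE 1 2 h12 1 1 pr1 pr1) 1 - Finsupp.single (pC 0 0 pr0) 1) + (1/3 : ℝ) • (Finsupp.single (pC 1 1 pr1) 1 - Finsupp.single (pE 0 2 h02 0 0 pr0 pr0) 1) + (1/3 : ℝ) • (Finsupp.single (pE 0 2 h02 1 1 pr1 pr1) 1 - Finsupp.single (pC 1 0 pr0)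 1) + (1/3 : ℝ) • (Finsupp.single (pC 2 1 pr1) 1 - Finsupp.single (pE 0 1 h01 0 0 pr0 pr0) 1) + (1/3 : ℝ) • (Finsupp.single (pE 0 1 h01 1 1 pr1 pr1) 1 - Finsupp.single (pC 2 0 pr0) 1) := by
    rw [f3_0_eq, f3_1_eq, f3_2_eq]
    module
  rw [hf]
  exact H

lemma plan_sgn (θ : Fin 3 → ℝ) (h : ∀ i, θ i = 1 ∨ θ i = -1) :
    IsPlanCost (∑ i, θ i • f3 i) 1 := by
  rw [Fin.sum_univ_three]
  rcases h 0 with h0 | h0 <;> rcases h 1 with h1 | h1 <;> rcases h 2 with h2 | h2 <;>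
    rw [h0, h1, h2]
  exacts [plan_case_ppp, plan_case_ppm, plan_case_pmp, plan_case_pmm, plan_case_mpp, plan_case_mpm, plan_case_mmp, plan_case_mmm]

lemma pair_coord (t : ℝ) (i0 j : Fin 3) :
    Finsupp.linearCombination ℝ (fun p : M3 => t * p.1 i0) (f3 j)
      = if j = i0 then -t else 0 := by
  fin_cases i0 <;> fin_cases j <;>
  · simp only [id_eq, Fin.zero_eta, Fin.mk_one, Fin.reduceFinMk, Fin.isValue]
    first | rw [f3_0_eq] | rw [f3_1_eq] | rw [f3_2_eq]
    simp only [map_add, map_smul, map_sub, Finsupp.linearCombination_single, one_smul,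
      smul_eq_mul, pC, pE, ctr, emid]
    norm_num [Fin.ext_iff]
    try ring

lemma lip_coord (t : ℝ) (ht : |t| = 1) (i0 : Fin 3) (x y : M3) :
    t * x.1 i0 - t * y.1 i0 ≤ dist x y := by
  have h1 : t * x.1 i0 - t * y.1 i0 ≤ |t * (x.1 i0 - y.1 i0)| := by
    rw [← mul_sub]; exact le_abs_self _
  rw [abs_mul, ht, one_mul] at h1
  have h2 : |x.1 i0 - y.1 i0| = dist (x.1 i0) (y.1 i0) := (Real.dist_eq _ _).symm
  have h3 := dist_le_pi_dist x.1 y.1 i0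
  rw [Subtype.dist_eq]
  linarith

lemma lower_bound (a : Fin 3 → ℝ) {c₀ : ℝ} (hp : IsPlanCost (∑ i, a i • f3 i) c₀)
    (i0 : Fin 3) : |a i0| ≤ tcCost (∑ i, a i • f3 i) := by
  set t : ℝ := if 0 ≤ a i0 then (-1 : ℝ) else 1 with hts
  have ht : |t| = 1 := by
    rw [hts]; split <;> norm_num
  have key := le_tcCost hp (fun p => t * p.1 i0) (lip_coord t ht i0)
  have hval : Finsupp.linearCombination ℝ (fun p : M3 => t * p.1 i0) (∑ i, a i • f3 i)
      = -t * a i0 := by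
    rw [map_sum]
    simp only [map_smul, pair_coord, smul_eq_mul]
    rw [Finset.sum_eq_single i0]
    · simp [mul_comm]
    · intro b _ hb; simp [hb]
    · simp
  rw [hval] at key
  have : -t * a i0 = |a i0| := by
    rw [hts]; rcases le_or_gt 0 (a i0) with h | h
    · rw [if_pos h, abs_of_nonneg h]; ring
    · rw [if_neg (not_le.mpr h), abs_of_neg h]; ring
  rwa [this] at key

def S8 (k : ℕ) (i : Fin 3) : ℝ := if k / 2^(i : ℕ) % 2 = 0 then 1 else -1

lemma S8_sign (k : ℕ) (i : Fin 3) : S8 k i = 1 ∨ S8 k i = -1 := by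
  unfold S8; split
  · exact Or.inl rfl
  · exact Or.inr rfl

lemma hS8_0_0 : S8 0 0 = 1 := by norm_num [S8]
lemma hS8_0_1 : S8 0 1 = 1 := by norm_num [S8]
lemma hS8_0_2 : S8 0 2 = 1 := by norm_num [S8]
lemma hS8_1_0 : S8 1 0 = -1 := by norm_num [S8]
lemma hS8_1_1 : S8 1 1 = 1 := by norm_num [S8]
lemma hS8_1_2 : S8 1 2 = 1 := by norm_num [S8]
lemma hS8_2_0 : S8 2 0 = 1 := by norm_num [S8]
lemma hS8_2_1 : S8 2 1 = -1 := by norm_num [S8]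
lemma hS8_2_2 : S8 2 2 = 1 := by norm_num [S8]
lemma hS8_3_0 : S8 3 0 = -1 := by norm_num [S8]
lemma hS8_3_1 : S8 3 1 = -1 := by norm_num [S8]
lemma hS8_3_2 : S8 3 2 = 1 := by norm_num [S8]
lemma hS8_4_0 : S8 4 0 = 1 := by norm_num [S8]
lemma hS8_4_1 : S8 4 1 = 1 := by norm_num [S8]
lemma hS8_4_2 : S8 4 2 = -1 := by norm_num [S8]
lemma hS8_5_0 : S8 5 0 = -1 := by norm_num [S8]
lemma hS8_5_1 : S8 5 1 = 1 := by norm_num [S8]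
lemma hS8_5_2 : S8 5 2 = -1 := by norm_num [S8]
lemma hS8_6_0 : S8 6 0 = 1 := by norm_num [S8]
lemma hS8_6_1 : S8 6 1 = -1 := by norm_num [S8]
lemma hS8_6_2 : S8 6 2 = -1 := by norm_num [S8]
lemma hS8_7_0 : S8 7 0 = -1 := by norm_num [S8]
lemma hS8_7_1 : S8 7 1 = -1 := by norm_num [S8]
lemma hS8_7_2 : S8 7 2 = -1 := by norm_num [S8]

set_option maxHeartbeats 1000000 in
lemma part3 (a : Fin 3 → ℝ) : tcCost (∑ i, a i • f3 i) = ⨆ i, |a i| := by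
  have hbdd : BddAbove (Set.range fun i => |a i|) := Set.Finite.bddAbove (Set.finite_range _)
  have habs : ∀ i, |a i| ≤ ⨆ i, |a i| := fun i => le_ciSup hbdd i
  have hm0 : (0:ℝ) ≤ ⨆ i, |a i| := le_trans (abs_nonneg _) (habs 0)
  set m := ⨆ i, |a i| with hmdef
  rcases eq_or_lt_of_le hm0 with hm | hm
  · have hz : ∀ i, a i = 0 := fun i =>
      abs_eq_zero.mp (le_antisymm (hm ▸ habs i) (abs_nonneg _))
    have h0 : (∑ i, a i • f3 i) = 0 := by
      rw [Fin.sum_univ_three, hz 0, hz 1, hz 2]; simp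
    rw [h0, ← hm]
    refine le_antisymm (tcCost_le IsPlanCost.zero) ?_
    rw [tcCost_eq]
    exact le_csInf ⟨0, IsPlanCost.zero⟩ fun c hc => hc.nonneg
  · set W : ℕ → ℝ := fun k =>
      m * ((1 + S8 k 0 * (a 0 / m)) * ((1 + S8 k 1 * (a 1 / m)) * (1 + S8 k 2 * (a 2 / m)))) / 8
      with hWdef
    have hfac : ∀ (k : ℕ) (i : Fin 3), 0 ≤ 1 + S8 k i * (a i / m) := by
      intro k i
      have h1 : |a i| / m ≤ 1 := (div_le_one hm).mpr (habs i)
      have h2 : |a i / m| ≤ 1 := by rwa [abs_div, abs_of_pos hm]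
      have := abs_le.mp h2
      rcases S8_sign k i with h | h <;> rw [h] <;> linarith
    have hW0 : ∀ k, 0 ≤ W k := by
      intro k
      have h0 := hfac k 0; have h1 := hfac k 1; have h2 := hfac k 2
      rw [hWdef]
      exact div_nonneg (mul_nonneg hm.le (mul_nonneg h0 (mul_nonneg h1 h2))) (by norm_num)
    have hplank : ∀ k ∈ Finset.range 8, IsPlanCost (W k • ∑ i, S8 k i • f3 i) (W k * 1) :=
      fun k _ => (plan_sgn _ (S8_sign k)).smul (W k) (hW0 k)
    have H := IsPlanCost.sum (Finset.range 8) _ _ hplank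
    have hm' : m ≠ 0 := ne_of_gt hm
    have c0 : W 0 - W 1 + W 2 - W 3 + W 4 - W 5 + W 6 - W 7 = a 0 := by
      rw [hWdef]; simp only [hS8_0_0, hS8_0_1, hS8_0_2, hS8_1_0, hS8_1_1, hS8_1_2, hS8_2_0, hS8_2_1, hS8_2_2, hS8_3_0, hS8_3_1, hS8_3_2, hS8_4_0, hS8_4_1, hS8_4_2, hS8_5_0, hS8_5_1, hS8_5_2, hS8_6_0, hS8_6_1, hS8_6_2, hS8_7_0, hS8_7_1, hS8_7_2]; field_simp; ring
    have c1 : W 0 + W 1 - W 2 - W 3 + W 4 + W 5 - W 6 - W 7 = a 1 := by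
      rw [hWdef]; simp only [hS8_0_0, hS8_0_1, hS8_0_2, hS8_1_0, hS8_1_1, hS8_1_2, hS8_2_0, hS8_2_1, hS8_2_2, hS8_3_0, hS8_3_1, hS8_3_2, hS8_4_0, hS8_4_1, hS8_4_2, hS8_5_0, hS8_5_1, hS8_5_2, hS8_6_0, hS8_6_1, hS8_6_2, hS8_7_0, hS8_7_1, hS8_7_2]; field_simp; ring
    have c2 : W 0 + W 1 + W 2 + W 3 - W 4 - W 5 - W 6 - W 7 = a 2 := by
      rw [hWdef]; simp only [hS8_0_0, hS8_0_1, hS8_0_2, hS8_1_0, hS8_1_1, hS8_1_2, hS8_2_0, hS8_2_1, hS8_2_2, hS8_3_0, hS8_3_1, hS8_3_2, hS8_4_0, hS8_4_1, hS8_4_2, hS8_5_0, hS8_5_1, hS8_5_2, hS8_6_0, hS8_6_1, hS8_6_2, hS8_7_0, hS8_7_1, hS8_7_2]; field_simp; ring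
    have hdecomp : (∑ i, a i • f3 i) = ∑ k ∈ Finset.range 8, W k • ∑ i, S8 k i • f3 i := by
      rw [Fin.sum_univ_three, ← c0, ← c1, ← c2]
      simp only [Finset.sum_range_succ, Finset.sum_range_zero, Fin.sum_univ_three]
      simp only [show S8 0 0 = 1 from by norm_num [S8],
        show S8 0 1 = 1 from by norm_num [S8],
        show S8 0 2 = 1 from by norm_num [S8],
        show S8 1 0 = -1 from by norm_num [S8],
        show S8 1 1 = 1 from by norm_num [S8],
        show S8 1 2 = 1 from by norm_num [S8],
        show S8 2 0 = 1 from by norm_num [S8],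
        show S8 2 1 = -1 from by norm_num [S8],
        show S8 2 2 = 1 from by norm_num [S8],
        show S8 3 0 = -1 from by norm_num [S8],
        show S8 3 1 = -1 from by norm_num [S8],
        show S8 3 2 = 1 from by norm_num [S8],
        show S8 4 0 = 1 from by norm_num [S8],
        show S8 4 1 = 1 from by norm_num [S8],
        show S8 4 2 = -1 from by norm_num [S8],
        show S8 5 0 = -1 from by norm_num [S8],
        show S8 5 1 = 1 from by norm_num [S8],
        show S8 5 2 = -1 from by norm_num [S8],
        show S8 6 0 = 1 from by norm_num [S8],
        show S8 6 1 = -1 from by norm_num [S8],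
        show S8 6 2 = -1 from by norm_num [S8],
        show S8 7 0 = -1 from by norm_num [S8],
        show S8 7 1 = -1 from by norm_num [S8],
        show S8 7 2 = -1 from by norm_num [S8], one_smul, neg_one_smul]
      module
    rw [← hdecomp] at H
    have hsumW : ∑ k ∈ Finset.range 8, W k * 1 = m := by
      simp only [Finset.sum_range_succ, Finset.sum_range_zero, mul_one]
      rw [hWdef]; simp only [hS8_0_0, hS8_0_1, hS8_0_2, hS8_1_0, hS8_1_1, hS8_1_2, hS8_2_0, hS8_2_1, hS8_2_2, hS8_3_0, hS8_3_1, hS8_3_2, hS8_4_0, hS8_4_1, hS8_4_2, hS8_5_0, hS8_5_1, hS8_5_2, hS8_6_0, hS8_6_1, hS8_6_2, hS8_7_0, hS8_7_1, hS8_7_2]; field_simp; ring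
    refine le_antisymm (le_of_le_of_eq (tcCost_le H) hsumW) ?_
    exact ciSup_le fun i0 => lower_bound a H i0

/-- `TC(M3)` contains an isometric copy of `ℓ∞³`: each `f3 i` has transportation cost `1`,
every signed sum `Σ θᵢ f3 i` (with `θᵢ = ±1`) has transportation cost `1`, and hence the
problems `f3 1, f3 2, f3 3` are completely intertwined:
`‖Σ aᵢ f3 i‖_TC = maxᵢ |aᵢ|` for all reals `aᵢ`. -/
theorem ell_infty_3_in_TC_M3 :
    (∀ i, tcCost (f3 i) = 1) ∧
    (∀ θ : Fin 3 → ℝ, (∀ i, θ i = 1 ∨ θ i = -1) → tcCost (∑ i, θ i • f3 i) = 1) ∧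
    (∀ a : Fin 3 → ℝ, tcCost (∑ i, a i • f3 i) = ⨆ i, |a i|) := by
  refine ⟨?_, ?_, part3⟩
  · intro i
    have h := part3 (fun j => if j = i then (1:ℝ) else 0)
    have e1 : (∑ j, (if j = i then (1:ℝ) else 0) • f3 j) = f3 i := by
      simp [ite_smul]
    have e2 : (⨆ j, |if j = i then (1:ℝ) else 0|) = 1 := by
      apply le_antisymm
      · apply ciSup_le; intro j; split <;> norm_num
      · have hb : BddAbove (Set.range fun j => |if j = i then (1:ℝ) else 0|) :=
          Set.Finite.bddAbove (Set.finite_range _)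
        have := le_ciSup hb i
        simpa using this
    rw [e1, e2] at h
    exact h
  · intro θ hθ
    have h := part3 θ
    have e2 : (⨆ i, |θ i|) = 1 := by
      have hall : ∀ i, |θ i| = 1 := fun i => by rcases hθ i with h' | h' <;> rw [h'] <;> norm_num
      calc (⨆ i, |θ i|) = ⨆ _ : Fin 3, (1:ℝ) := by
            congr 1; funext i; rw [hall i]
        _ = 1 := ciSup_const
    rw [e2] at h
    exact h
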